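/- Let ρ be a critical radius function on ℝ^d, let φ be a Young function, and let T be a map from a set S of measurable functions on ℝ^d to measurable functions on ℝ^d such that: for every θ ≥ 0 there exists a constant C with w({x : |Tf(x)| > λ}) ≤ (C/λ) ∫ |f| M_φ^θ w for every weight w, every f ∈ S, and every λ > 0. Then for every f ∈ S satisfying ∫_{ℝ^d} |f(x)| (1+|x|)^{−σ} dx < ∞ for some σ > 0, Tf belongs to L^{1,∞}_{loc}(ℝ^d), i.e. for every ball B one has sup_{λ>0} λ·|{x ∈ B : |Tf(x)| > λ}| < ∞; in particular Tf is finite almost everywhere. -/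

import Mathlib

open MeasureTheory Metric Set
open scoped ENNReal NNReal

noncomputable section

/-- Euclidean space ℝ^d. -/
abbrev Euc (d : ℕ) := EuclideanSpace ℝ (Fin d)

/-- A Young function: continuous, convex, increasing, vanishing at 0, nonnegative on `[0,∞)`. -/
structure IsYoung (A : ℝ → ℝ) : Prop where
  continuous : ContinuousOn A (Ici 0)
  convex : ConvexOn ℝ (Ici 0) A
  mono : MonotoneOn A (Ici 0)
  zero : A 0 = 0
  nonneg : ∀ t, 0 ≤ t → 0 ≤ A t

/-- The Luxemburg average `‖f‖_{A,B(c,r)}`. -/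
def luxAvg {d : ℕ} (A : ℝ → ℝ) (f : Euc d → ℝ) (c : Euc d) (r : ℝ) : ℝ :=
  sInf {lam : ℝ | 0 < lam ∧
    (∫ t in ball c r, A (|f t| / lam)) ≤ (volume (ball c r)).toReal}

/-- The Orlicz maximal operator `M_A`. -/
def orliczMax {d : ℕ} (A : ℝ → ℝ) (f : Euc d → ℝ) (x : Euc d) : ℝ≥0∞ :=
  ⨆ (c : Euc d) (r : ℝ) (_ : x ∈ ball c r), ENNReal.ofReal (luxAvg A f c r)

/-- The local Orlicz maximal operator `M_A^{loc}` (over sub-critical balls). -/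
def orliczMaxLoc {d : ℕ} (ρ : Euc d → ℝ) (A : ℝ → ℝ) (f : Euc d → ℝ) (x : Euc d) : ℝ≥0∞ :=
  ⨆ (c : Euc d) (r : ℝ) (_ : x ∈ ball c r ∧ r ≤ ρ c), ENNReal.ofReal (luxAvg A f c r)

/-- The maximal operator `M_A^θ`. -/
def orliczMaxTheta {d : ℕ} (ρ : Euc d → ℝ) (θ : ℝ) (A : ℝ → ℝ) (f : Euc d → ℝ)
    (x : Euc d) : ℝ≥0∞ :=
  ⨆ (c : Euc d) (r : ℝ) (_ : x ∈ ball c r),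
    ENNReal.ofReal ((1 + r / ρ c) ^ (-θ) * luxAvg A f c r)

/-- The maximal operator `M_r^θ` of `r`-power averages. -/
def powMaxTheta {d : ℕ} (ρ : Euc d → ℝ) (r θ : ℝ) (w : Euc d → ℝ) (x : Euc d) : ℝ≥0∞ :=
  ⨆ (c : Euc d) (s : ℝ) (_ : x ∈ ball c s),
    ENNReal.ofReal ((1 + s / ρ c) ^ (-θ) *
      ((∫ y in ball c s, w y ^ r) / (volume (ball c s)).toReal) ^ (1 / r))

/-- The maximal operator `M^θ` of plain averages. -/
def avgMaxTheta {d : ℕ} (ρ : Euc d → ℝ) (θ : ℝ) (w : Euc d → ℝ) (x : Euc d) : ℝ≥0∞ :=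
  ⨆ (c : Euc d) (s : ℝ) (_ : x ∈ ball c s),
    ENNReal.ofReal ((1 + s / ρ c) ^ (-θ) *
      ((∫ y in ball c s, w y) / (volume (ball c s)).toReal))

/-- The class `D_p` of Young functions: `∫_c^∞ (t/A(t))^{p'-1} dt/t < ∞` for some `c > 0`,
where `p' = p/(p-1)`. -/
def InDp (A : ℝ → ℝ) (p : ℝ) : Prop :=
  ∃ c > (0:ℝ), IntegrableOn (fun t => (t / A t) ^ (p / (p - 1) - 1) / t) (Ici c)

/-- A weight: a nonnegative locally integrable function. -/
def IsWeight {d : ℕ} (w : Euc d → ℝ) : Prop :=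
  (∀ x, 0 ≤ w x) ∧ LocallyIntegrable w volume

/-- Bounded measurable functions with compact support. -/
def BddCompSupp {d : ℕ} (f : Euc d → ℝ) : Prop :=
  Measurable f ∧ (∃ M, ∀ x, |f x| ≤ M) ∧ HasCompactSupport f

/-- A Calderón–Zygmund operator with kernel `K`. -/
structure IsCZO (d : ℕ) (T : (Euc d → ℝ) → Euc d → ℝ) (K : Euc d → Euc d → ℝ) : Prop where
  add : ∀ f g, T (f + g) = T f + T g
  smul : ∀ (a : ℝ) (f), T (a • f) = a • T f
  l2bdd : ∃ C > (0:ℝ), ∀ f : Euc d → ℝ, MemLp f 2 volume →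
    MemLp (T f) 2 volume ∧ eLpNorm (T f) 2 volume ≤ ENNReal.ofReal C * eLpNorm f 2 volume
  meas_kernel : Measurable (Function.uncurry K)
  repr : ∀ f, BddCompSupp f →
    ∀ᵐ x ∂volume, x ∉ tsupport f → T f x = ∫ y, K x y * f y
  kernel_bounds : ∃ C > (0:ℝ), ∃ δ₀ : ℝ, 0 < δ₀ ∧ δ₀ ≤ 1 ∧
    (∀ x y, x ≠ y → |K x y| ≤ C * dist x y ^ (-(d : ℝ))) ∧
    (∀ x x' y, x ≠ y → x' ≠ y → 2 * dist x x' ≤ dist x y →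
      |K x y - K x' y| + |K y x - K y x'| ≤
        C * dist x x' ^ δ₀ * dist x y ^ (-(d : ℝ) - δ₀))

/-- A critical radius function with constants `C₀`, `N₀`. -/
def IsCriticalRadius {d : ℕ} (ρ : Euc d → ℝ) (C₀ N₀ : ℝ) : Prop :=
  0 < C₀ ∧ 1 ≤ N₀ ∧ (∀ x, 0 < ρ x) ∧
  ∀ x y : Euc d,
    C₀⁻¹ * ρ x * (1 + dist x y / ρ x) ^ (-N₀) ≤ ρ y ∧
    ρ y ≤ C₀ * ρ x * (1 + dist x y / ρ x) ^ (N₀ / (N₀ + 1))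

/-- The annulus `{x : R < |x - x₀| < 2R}`. -/
def annulus {d : ℕ} (x₀ : Euc d) (R : ℝ) : Set (Euc d) :=
  {x | R < dist x x₀ ∧ dist x x₀ < 2 * R}

/-- Condition `(a_s)`. -/
def CondAs {d : ℕ} (ρ : Euc d → ℝ) (s : ℝ) (K : Euc d → Euc d → ℝ) : Prop :=
  ∀ N > (0:ℝ), ∃ C > (0:ℝ), ∀ (x₀ y : Euc d) (R : ℝ), 0 < R → dist y x₀ < R / 2 →
    (∫ x in annulus x₀ R, |K x y| ^ s) ^ (1 / s) ≤
      C * R ^ (-((d : ℝ) / (s / (s - 1)))) * (1 + R / ρ x₀) ^ (-N)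

/-- Condition `(a'_s)`. -/
def CondAs' {d : ℕ} (ρ : Euc d → ℝ) (s : ℝ) (K : Euc d → Euc d → ℝ) : Prop :=
  ∀ N > (0:ℝ), ∃ C > (0:ℝ), ∀ (x₀ y : Euc d) (R : ℝ), 0 < R →
    R < dist y x₀ → dist y x₀ < 2 * R →
    (∫ x in ball x₀ (R / 2), |K x y| ^ s) ^ (1 / s) ≤
      C * R ^ (-((d : ℝ) / (s / (s - 1)))) * (1 + R / ρ x₀) ^ (-N)

/-- Condition `(b_s)` for the kernel `Q` (typically `Q = K - K₀`). -/
def CondBs {d : ℕ} (ρ : Euc d → ℝ) (s : ℝ) (Q : Euc d → Euc d → ℝ) : Prop :=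
  ∃ C > (0:ℝ), ∃ δ > (0:ℝ), ∀ (x₀ y : Euc d) (R : ℝ), 0 < R → R ≤ ρ x₀ →
    dist y x₀ < R / 2 →
    (∫ x in annulus x₀ R, |Q x y| ^ s) ^ (1 / s) ≤
      C * R ^ (-((d : ℝ) / (s / (s - 1)))) * (R / ρ x₀) ^ δ

/-- Condition `(b'_s)` for the kernel `Q`. -/
def CondBs' {d : ℕ} (ρ : Euc d → ℝ) (s : ℝ) (Q : Euc d → Euc d → ℝ) : Prop :=
  ∃ C > (0:ℝ), ∃ ε > (0:ℝ), ∀ (x₀ y : Euc d) (R : ℝ), 0 < R → R ≤ ρ x₀ →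
    R < dist y x₀ → dist y x₀ < 2 * R →
    (∫ x in ball x₀ (R / 2), |Q x y| ^ s) ^ (1 / s) ≤
      C * R ^ (-((d : ℝ) / (s / (s - 1)))) * (R / ρ x₀) ^ ε

/-- Condition `(c_s)`. -/
def CondCs {d : ℕ} (ρ : Euc d → ℝ) (s : ℝ) (K : Euc d → Euc d → ℝ) : Prop :=
  ∃ δ > (0:ℝ), ∀ N > (0:ℝ), ∃ C > (0:ℝ), ∀ (x₀ y : Euc d) (R : ℝ), 0 < R →
    dist y x₀ < R / 2 →
    (∫ x in annulus x₀ R, |K x y| ^ s) ^ (1 / s) ≤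
      C * R ^ (-((d : ℝ) / (s / (s - 1)))) * (1 + ρ x₀ / R) ^ (-δ) * (1 + R / ρ x₀) ^ (-N)

/-- Pointwise size condition `(a_∞)`. -/
def CondAinfty {d : ℕ} (ρ : Euc d → ℝ) (K : Euc d → Euc d → ℝ) : Prop :=
  ∀ N > (0:ℝ), ∃ C > (0:ℝ), ∀ x y : Euc d, x ≠ y →
    |K x y| ≤ C * dist x y ^ (-(d : ℝ)) * (1 + dist x y / ρ x) ^ (-N)

/-- Pointwise comparison condition `(b_∞)` for `Q = K - K₀`. -/
def CondBinfty {d : ℕ} (ρ : Euc d → ℝ) (Q : Euc d → Euc d → ℝ) : Prop :=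
  ∃ C > (0:ℝ), ∃ δ > (0:ℝ), ∀ x y : Euc d, x ≠ y →
    |Q x y| ≤ C * dist x y ^ (-(d : ℝ)) * (dist x y / ρ y) ^ δ

/-! Testing the weighted weak-type inequality with `w = 𝟙_B` turns its left side into
`|{x ∈ B : |Tf(x)| > λ}|`. For `θ = σ (N₀ + 1)` the maximal function `M_φ^θ 𝟙_B` decays like
`(1 + |x|)^{-σ}`: a ball `B(c, r)` only contributes if it meets `B`, the Luxemburg average of
`𝟙_B` over it is bounded, and the growth bound `ρ(c) ≲ (1 + r)^{N₀/(N₀+1)}` makes the factor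
`(1 + r/ρ(c))^{-θ}` at most a multiple of `(1 + r)^{-σ} ≲ (1 + |x|)^{-σ}`. The right side of the
weak-type inequality is therefore controlled by `∫ |f| (1 + |x|)^{-σ} < ∞`. -/

section LuxemburgAverage

variable {d : ℕ} {A : ℝ → ℝ} {f : Euc d → ℝ} {c : Euc d} {r : ℝ}

theorem luxAvg_nonneg : 0 ≤ luxAvg A f c r :=
  Real.sInf_nonneg fun _ hlam => hlam.1.le

theorem luxAvg_le {lam : ℝ} (hlam : 0 < lam)
    (h : ∫ t in ball c r, A (|f t| / lam) ≤ (volume (ball c r)).toReal) :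
    luxAvg A f c r ≤ lam :=
  csInf_le ⟨0, fun _ hl => hl.1.le⟩ ⟨hlam, h⟩

theorem luxAvg_eq_zero_of_eqOn_zero (hA : A 0 = 0) (hf : EqOn f 0 (ball c r)) :
    luxAvg A f c r = 0 := by
  refine le_antisymm (le_of_forall_gt_imp_ge_of_dense fun lam hlam => luxAvg_le hlam ?_)
    luxAvg_nonneg
  rw [setIntegral_congr_fun measurableSet_ball (g := fun _ => 0)
    (fun t ht => by simp [hf ht, hA]), integral_zero]
  exact ENNReal.toReal_nonneg

theorem luxAvg_indicator_one_le {E : Set (Euc d)} (hE : MeasurableSet E) {t : ℝ} (ht : 0 < t)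
    (hA : A 0 = 0) (hAt : 0 ≤ A t) (hAt_le : A t ≤ 1) :
    luxAvg A (E.indicator 1) c r ≤ t⁻¹ := by
  refine luxAvg_le (inv_pos.2 ht) ?_
  have hint : ∀ y, A (|E.indicator 1 y| / t⁻¹) = E.indicator (fun _ => A t) y := fun y => by
    by_cases hy : y ∈ E <;> simp [hy, hA]
  calc ∫ y in ball c r, A (|E.indicator 1 y| / t⁻¹)
      = ∫ _ in ball c r ∩ E, A t := by simp_rw [hint]; exact setIntegral_indicator hE
    _ = (volume (ball c r ∩ E)).toReal * A t := by rw [setIntegral_const, smul_eq_mul]; rfl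
    _ ≤ (volume (ball c r)).toReal * 1 := by
        gcongr
        exacts [measure_ball_lt_top.ne, inter_subset_left]
    _ = (volume (ball c r)).toReal := mul_one _

end LuxemburgAverage

theorem IsYoung.exists_pos_le_one {A : ℝ → ℝ} (hA : IsYoung A) : ∃ t > 0, A t ≤ 1 := by
  have hcont : ∀ᶠ t in nhdsWithin 0 (Ioi (0:ℝ)), A t < 1 :=
    ((hA.continuous 0 self_mem_Ici).mono Ioi_subset_Ici_self).eventually
      (Iio_mem_nhds (by rw [hA.zero]; exact one_pos))
  obtain ⟨t, ht, ht1⟩ := (eventually_mem_nhdsWithin.and hcont).exists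
  exact ⟨t, ht, ht1.le⟩

theorem isWeight_indicator_one {d : ℕ} {E : Set (Euc d)} (hE : MeasurableSet E) :
    IsWeight (E.indicator 1) :=
  ⟨indicator_nonneg fun _ _ => zero_le_one, (locallyIntegrable_const 1).indicator hE⟩

theorem setLIntegral_ofReal_indicator_one {α : Type*} [MeasurableSpace α] {μ : Measure α}
    {E : Set α} (hE : MeasurableSet E) (s : Set α) :
    ∫⁻ x in s, ENNReal.ofReal (E.indicator 1 x) ∂μ = μ (E ∩ s) := by
  have h : (fun x => ENNReal.ofReal (E.indicator 1 x)) = E.indicator 1 := funext fun x => by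
    by_cases hx : x ∈ E <;> simp [hx]
  rw [h, lintegral_indicator_one hE, Measure.restrict_apply hE]

theorem iSup_ofReal_mul_le_of_le_div {g : ℝ → ℝ≥0∞} {C : ℝ} {J : ℝ≥0∞}
    (h : ∀ lam > 0, g lam ≤ ENNReal.ofReal (C / lam) * J) :
    ⨆ lam ∈ Ioi (0:ℝ), ENNReal.ofReal lam * g lam ≤ ENNReal.ofReal C * J := by
  refine iSup₂_le fun lam (hlam : 0 < lam) => ?_
  calc ENNReal.ofReal lam * g lam ≤ ENNReal.ofReal lam * (ENNReal.ofReal (C / lam) * J) := by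
        gcongr; exact h lam hlam
    _ = ENNReal.ofReal (lam * (C / lam)) * J := by rw [ENNReal.ofReal_mul hlam.le, mul_assoc]
    _ = ENNReal.ofReal C * J := by rw [mul_div_cancel₀ C hlam.ne']

theorem one_add_div_rpow_neg_le {p r A β θ : ℝ} (hr : 0 ≤ r) (hp : 0 < p) (hA : 1 ≤ A)
    (hβ : 0 ≤ β) (hθ : 0 ≤ θ) (hpA : p ≤ A * (1 + r) ^ β) :
    (1 + r / p) ^ (-θ) ≤ A ^ θ * (1 + r) ^ (-((1 - β) * θ)) := by
  have h1r : 0 < 1 + r := by linarith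
  have hA0 : 0 < A := by linarith
  have hmax : max 1 p ≤ A * (1 + r) ^ β :=
    max_le (one_le_mul_of_one_le_of_one_le hA (Real.one_le_rpow (by linarith) hβ)) hpA
  have hmax_div : (1 + r) / max 1 p ≤ 1 + r / p := by
    rcases le_total p 1 with hp1 | hp1
    · rw [max_eq_left hp1, div_one]
      gcongr
      exact le_div_self hr hp hp1
    · rw [max_eq_right hp1, add_div]
      gcongr
      exact div_le_one_of_le₀ hp1 hp.le
  have hbase : (1 + r) ^ (1 - β) / A ≤ 1 + r / p :=
    calc (1 + r) ^ (1 - β) / A = (1 + r) / (A * (1 + r) ^ β) := by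
          rw [Real.rpow_sub h1r, Real.rpow_one]; field_simp
      _ ≤ (1 + r) / max 1 p := div_le_div_of_nonneg_left h1r.le (by positivity) hmax
      _ ≤ 1 + r / p := hmax_div
  calc (1 + r / p) ^ (-θ) ≤ ((1 + r) ^ (1 - β) / A) ^ (-θ) :=
        Real.rpow_le_rpow_of_nonpos (by positivity) hbase (by linarith)
    _ = A ^ θ * (1 + r) ^ (-((1 - β) * θ)) := by
        rw [Real.div_rpow (by positivity) hA0.le, ← Real.rpow_mul h1r.le, Real.rpow_neg hA0.le,
          div_inv_eq_mul, mul_comm, mul_neg]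

theorem rpow_neg_le_mul_rpow_neg {a b K σ : ℝ} (ha : 0 < a) (hK : 0 < K) (hab : a ≤ K * b)
    (hσ : 0 ≤ σ) : b ^ (-σ) ≤ K ^ σ * a ^ (-σ) := by
  have hb : 0 < b := pos_of_mul_pos_right (ha.trans_le hab) hK.le
  calc b ^ (-σ) = K ^ σ * (K * b) ^ (-σ) := by
        rw [Real.mul_rpow hK.le hb.le, ← mul_assoc, Real.rpow_neg hK.le,
          mul_inv_cancel₀ (Real.rpow_pos_of_pos hK σ).ne', one_mul]
    _ ≤ K ^ σ * a ^ (-σ) :=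
        mul_le_mul_of_nonneg_left (Real.rpow_le_rpow_of_nonpos ha hab (neg_nonpos.2 hσ))
          (by positivity)

namespace IsCriticalRadius

variable {d : ℕ} {ρ : Euc d → ℝ} {C₀ N₀ : ℝ}

theorem le_mul_one_add_rpow (hρ : IsCriticalRadius ρ C₀ N₀) (x₀ : Euc d) (R : ℝ) :
    ∃ A ≥ 1, ∀ c r, 0 ≤ r → dist x₀ c ≤ R + r → ρ c ≤ A * (1 + r) ^ (N₀ / (N₀ + 1)) := by
  obtain ⟨hC₀, hN₀, hρpos, hρbd⟩ := hρ
  have hρ₀ := hρpos x₀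
  have hβ : 0 ≤ N₀ / (N₀ + 1) := by positivity
  set a := (|R| + 1) / ρ x₀
  have ha : 0 ≤ a := by positivity
  refine ⟨max 1 (C₀ * ρ x₀ * (1 + a) ^ (N₀ / (N₀ + 1))), le_max_left _ _, fun c r hr hc => ?_⟩
  have hbase : 1 + dist x₀ c / ρ x₀ ≤ (1 + a) * (1 + r) :=
    calc 1 + dist x₀ c / ρ x₀ ≤ 1 + (|R| + 1) * (1 + r) / ρ x₀ := by
          gcongr
          nlinarith [le_abs_self R, abs_nonneg R]
      _ = 1 + a * (1 + r) := by ring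
      _ ≤ (1 + a) * (1 + r) := by nlinarith
  calc ρ c ≤ C₀ * ρ x₀ * (1 + dist x₀ c / ρ x₀) ^ (N₀ / (N₀ + 1)) := (hρbd x₀ c).2
    _ ≤ C₀ * ρ x₀ * ((1 + a) * (1 + r)) ^ (N₀ / (N₀ + 1)) := by gcongr
    _ = C₀ * ρ x₀ * (1 + a) ^ (N₀ / (N₀ + 1)) * (1 + r) ^ (N₀ / (N₀ + 1)) := by
        rw [Real.mul_rpow (by positivity) (by positivity), mul_assoc (C₀ * ρ x₀)]
    _ ≤ _ := by gcongr; exact le_max_right _ _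

theorem orliczMaxTheta_indicator_ball_le (hρ : IsCriticalRadius ρ C₀ N₀) {φ : ℝ → ℝ}
    (hφ : IsYoung φ) (x₀ : Euc d) (r₀ : ℝ) {σ : ℝ} (hσ : 0 ≤ σ) :
    ∃ K ≥ 0, ∀ x, orliczMaxTheta ρ (σ * (N₀ + 1)) φ ((ball x₀ r₀).indicator 1) x ≤
      ENNReal.ofReal (K * (1 + ‖x‖) ^ (-σ)) := by
  have hN₀ : 0 < N₀ + 1 := by linarith [hρ.2.1]
  have hθ : 0 ≤ σ * (N₀ + 1) := by positivity
  have hβ : 0 ≤ N₀ / (N₀ + 1) := div_nonneg (by linarith [hρ.2.1]) hN₀.le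
  obtain ⟨t, ht, hφt⟩ := hφ.exists_pos_le_one
  obtain ⟨A, hA, hρc⟩ := hρ.le_mul_one_add_rpow x₀ r₀
  set L := 2 + ‖x₀‖ + |r₀| with hL_def
  have hL : 2 ≤ L := by have := abs_nonneg r₀; have := norm_nonneg x₀; linarith
  refine ⟨A ^ (σ * (N₀ + 1)) * L ^ σ * t⁻¹, by positivity,
    fun x => iSup₂_le fun c r => iSup_le fun hx => ?_⟩
  by_cases hmeet : (ball c r ∩ ball x₀ r₀).Nonempty
  · obtain ⟨z, hzc, hz₀⟩ := hmeet
    rw [mem_ball] at hx hzc hz₀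
    have hr : 0 ≤ r := dist_nonneg.trans hx.le
    have hc : dist x₀ c ≤ r₀ + r := by
      linarith [dist_triangle x₀ z c, dist_comm x₀ z]
    have hnorm : 1 + ‖x‖ ≤ L * (1 + r) := by
      have hx₀ : ‖x‖ ≤ ‖x₀‖ + dist x x₀ := by
        rw [dist_eq_norm]; exact norm_le_norm_add_norm_sub' x x₀
      have hLr : 2 * r ≤ L * r := by nlinarith
      linarith [dist_triangle x c x₀, dist_comm c x₀, le_abs_self r₀]
    have hexp : (1 - N₀ / (N₀ + 1)) * (σ * (N₀ + 1)) = σ := by field_simp; ring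
    have hdecay : (1 + r / ρ c) ^ (-(σ * (N₀ + 1))) ≤
        A ^ (σ * (N₀ + 1)) * L ^ σ * (1 + ‖x‖) ^ (-σ) :=
      calc (1 + r / ρ c) ^ (-(σ * (N₀ + 1)))
        ≤ A ^ (σ * (N₀ + 1)) * (1 + r) ^ (-σ) := by
            simpa only [hexp] using one_add_div_rpow_neg_le hr (hρ.2.2.1 c) hA hβ hθ (hρc c r hr hc)
        _ ≤ A ^ (σ * (N₀ + 1)) * (L ^ σ * (1 + ‖x‖) ^ (-σ)) := by
            gcongr
            exact rpow_neg_le_mul_rpow_neg (by positivity) (by positivity) hnorm hσ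
        _ = A ^ (σ * (N₀ + 1)) * L ^ σ * (1 + ‖x‖) ^ (-σ) := by ring
    refine ENNReal.ofReal_le_ofReal ?_
    calc (1 + r / ρ c) ^ (-(σ * (N₀ + 1))) * luxAvg φ ((ball x₀ r₀).indicator 1) c r
        ≤ A ^ (σ * (N₀ + 1)) * L ^ σ * (1 + ‖x‖) ^ (-σ) * t⁻¹ :=
          mul_le_mul hdecay (luxAvg_indicator_one_le measurableSet_ball ht hφ.zero
            (hφ.nonneg t ht.le) hφt) luxAvg_nonneg (by positivity)
      _ = A ^ (σ * (N₀ + 1)) * L ^ σ * t⁻¹ * (1 + ‖x‖) ^ (-σ) := by ring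
  · rw [luxAvg_eq_zero_of_eqOn_zero hφ.zero fun y hy =>
      indicator_of_notMem (fun hy₀ => hmeet ⟨y, hy, hy₀⟩) _, mul_zero, ENNReal.ofReal_zero]
    exact bot_le

end IsCriticalRadius

theorem stmt19_general {d : ℕ} (ρ : Euc d → ℝ) (C₀ N₀ : ℝ)
    (hρ : IsCriticalRadius ρ C₀ N₀)
    (φ : ℝ → ℝ) (hφ : IsYoung φ)
    (S : Set (Euc d → ℝ)) (T : (Euc d → ℝ) → Euc d → ℝ)
    (hT : ∀ θ : ℝ, 0 ≤ θ → ∃ C > (0:ℝ), ∀ w : Euc d → ℝ, IsWeight w → ∀ f ∈ S,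
      ∀ lam > (0:ℝ),
      ∫⁻ x in {y : Euc d | lam < |T f y|}, ENNReal.ofReal (w x) ≤
        ENNReal.ofReal (C / lam) *
          ∫⁻ x, ENNReal.ofReal (|f x|) * orliczMaxTheta ρ θ φ w x) :
    ∀ f ∈ S,
      (∃ σ > (0:ℝ),
        (∫⁻ x : Euc d, ENNReal.ofReal (|f x| * (1 + ‖x‖) ^ (-σ))) < ⊤) →
      ∀ (x₀ : Euc d) (r : ℝ),
        (⨆ lam ∈ Ioi (0:ℝ), ENNReal.ofReal lam *
          volume {x ∈ ball x₀ r | lam < |T f x|}) < ⊤ := by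
  rintro f hfS ⟨σ, hσ, hf⟩ x₀ r
  obtain ⟨K, hK, hMw⟩ := hρ.orliczMaxTheta_indicator_ball_le hφ x₀ r hσ.le
  obtain ⟨C, -, hC⟩ := hT (σ * (N₀ + 1)) (by have := hρ.2.1; positivity)
  have hrhs : ∫⁻ x, ENNReal.ofReal |f x| * orliczMaxTheta ρ (σ * (N₀ + 1)) φ
      ((ball x₀ r).indicator 1) x ≤
      ENNReal.ofReal K * ∫⁻ x, ENNReal.ofReal (|f x| * (1 + ‖x‖) ^ (-σ)) := by
    rw [← lintegral_const_mul' _ _ ENNReal.ofReal_ne_top]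
    refine lintegral_mono fun x => (mul_le_mul_right (hMw x) _).trans_eq ?_
    rw [← ENNReal.ofReal_mul (abs_nonneg _), ← ENNReal.ofReal_mul hK, mul_left_comm]
  have hweak : ∀ lam > 0, volume {x ∈ ball x₀ r | lam < |T f x|} ≤ ENNReal.ofReal (C / lam) *
      (ENNReal.ofReal K * ∫⁻ x, ENNReal.ofReal (|f x| * (1 + ‖x‖) ^ (-σ))) := fun lam hlam =>
    calc volume {x ∈ ball x₀ r | lam < |T f x|}
        = ∫⁻ x in {y | lam < |T f y|}, ENNReal.ofReal ((ball x₀ r).indicator 1 x) :=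
          (setLIntegral_ofReal_indicator_one measurableSet_ball _).symm
      _ ≤ _ := hC _ (isWeight_indicator_one measurableSet_ball) f hfS lam hlam
      _ ≤ _ := mul_le_mul_right hrhs _
  exact (iSup_ofReal_mul_le_of_le_div hweak).trans_lt
    (ENNReal.mul_lt_top ENNReal.ofReal_lt_top (ENNReal.mul_lt_top ENNReal.ofReal_lt_top hf))

/-- Theorem 5.4: if `T` satisfies, for every `θ ≥ 0`,
`w({|Tf| > λ}) ≤ (C/λ) ∫ |f| M_φ^θ w` for all weights `w`, all `f ∈ S` and all `λ > 0`, then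
for every `f ∈ S` with `∫ |f| (1+|x|)^{-σ} < ∞` for some `σ > 0`, `Tf ∈ L^{1,∞}_loc`, i.e. on
every ball `B`, `sup_{λ>0} λ |{x ∈ B : |Tf(x)| > λ}| < ∞`. -/
theorem stmt19 {d : ℕ} (hd : 1 ≤ d) (ρ : Euc d → ℝ) (C₀ N₀ : ℝ)
    (hρ : IsCriticalRadius ρ C₀ N₀)
    (φ : ℝ → ℝ) (hφ : IsYoung φ)
    (S : Set (Euc d → ℝ)) (T : (Euc d → ℝ) → Euc d → ℝ)
    (hT : ∀ θ : ℝ, 0 ≤ θ → ∃ C > (0:ℝ), ∀ w : Euc d → ℝ, IsWeight w → ∀ f ∈ S,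
      ∀ lam > (0:ℝ),
      ∫⁻ x in {y : Euc d | lam < |T f y|}, ENNReal.ofReal (w x) ≤
        ENNReal.ofReal (C / lam) *
          ∫⁻ x, ENNReal.ofReal (|f x|) * orliczMaxTheta ρ θ φ w x) :
    ∀ f ∈ S,
      (∃ σ > (0:ℝ),
        (∫⁻ x : Euc d, ENNReal.ofReal (|f x| * (1 + ‖x‖) ^ (-σ))) < ⊤) →
      ∀ (x₀ : Euc d) (r : ℝ),
        (⨆ lam ∈ Ioi (0:ℝ), ENNReal.ofReal lam *
          volume {x ∈ ball x₀ r | lam < |T f x|}) < ⊤ :=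
  stmt19_general ρ C₀ N₀ hρ φ hφ S T hT
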